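/- arXiv:1501.01062 — 3 statements merged into one kernel-verified Lean document; each statement's English description precedes it below -/
import Mathlib

section
/- Let H be a real inner product space, let 0 < ε < √2, and let U be a finite set of n ≥ 1 unit vectors in H. Suppose there exists a unit vector u* ∈ H with ‖u* − u‖ ≤ √2 − ε for every u ∈ U. Set α = ε(2√2 − ε)/2. Then there exists u₀ ∈ U such that the number of u ∈ U with ‖u − u₀‖ ≤ √(2 − α²) is at least (α²/2)·n. -/
open scoped Classical

/-!
Since the cap around `u*` has radius below `√2`, every `u ∈ U` satisfies `⟪u*, u⟫ ≥ α`, so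
`‖∑ U‖ ≥ α n`. Expanding `‖∑ U‖² = ∑_{v ∈ U} ⟪v, ∑ U⟫ ≥ α² n²` gives a `u₀ ∈ U` with
`⟪u₀, ∑ U⟫ ≥ α² n`. Points farther than `√(2 - α²)` from `u₀` contribute less than `α²/2`
each to this sum and the others at most `1`, so at least `α² n / 2` points are close to `u₀`.
-/

open Finset
open scoped InnerProductSpace

section UnitVectors

variable {H : Type*} [NormedAddCommGroup H] [InnerProductSpace ℝ H]

theorem norm_sub_sq_eq_two_sub_two_inner {x y : H} (hx : ‖x‖ = 1) (hy : ‖y‖ = 1) :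
    ‖x - y‖ ^ 2 = 2 - 2 * ⟪x, y⟫_ℝ := by
  rw [norm_sub_sq_real, hx, hy]
  ring

theorem one_sub_sq_div_two_le_inner {x y : H} {r : ℝ} (hx : ‖x‖ = 1) (hy : ‖y‖ = 1)
    (h : ‖x - y‖ ≤ r) : 1 - r ^ 2 / 2 ≤ ⟪x, y⟫_ℝ := by
  have hsq : ‖x - y‖ ^ 2 ≤ r ^ 2 := pow_le_pow_left₀ (norm_nonneg _) h 2
  rw [norm_sub_sq_eq_two_sub_two_inner hx hy] at hsq
  linarith

theorem inner_lt_of_sqrt_lt_norm_sub {x y : H} {b : ℝ} (hx : ‖x‖ = 1) (hy : ‖y‖ = 1)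
    (h : √(2 - b) < ‖x - y‖) : ⟪x, y⟫_ℝ < b / 2 := by
  have hsq := Real.lt_sq_of_sqrt_lt h
  rw [norm_sub_sq_eq_two_sub_two_inner hx hy] at hsq
  linarith

theorem real_inner_le_one {x y : H} (hx : ‖x‖ = 1) (hy : ‖y‖ = 1) : ⟪x, y⟫_ℝ ≤ 1 := by
  simpa [hx, hy] using real_inner_le_norm x y

theorem mul_card_le_norm_sum {s : Finset H} {w : H} {a : ℝ} (hw : ‖w‖ = 1)
    (h : ∀ u ∈ s, a ≤ ⟪w, u⟫_ℝ) : a * #s ≤ ‖∑ u ∈ s, u‖ :=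
  calc a * #s = ∑ _u ∈ s, a := by rw [sum_const, nsmul_eq_mul, mul_comm]
    _ ≤ ∑ u ∈ s, ⟪w, u⟫_ℝ := sum_le_sum h
    _ = ⟪w, ∑ u ∈ s, u⟫_ℝ := (inner_sum _ _ _).symm
    _ ≤ ‖∑ u ∈ s, u‖ := by simpa [hw] using real_inner_le_norm w (∑ u ∈ s, u)

theorem exists_sq_mul_card_le_inner_sum {s : Finset H} {w : H} {a : ℝ} (hs : s.Nonempty)
    (ha : 0 ≤ a) (hw : ‖w‖ = 1) (h : ∀ u ∈ s, a ≤ ⟪w, u⟫_ℝ) :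
    ∃ v ∈ s, a ^ 2 * #s ≤ ⟪v, ∑ u ∈ s, u⟫_ℝ := by
  have hnorm := mul_card_le_norm_sum hw h
  have hsq : ∑ _v ∈ s, a ^ 2 * #s ≤ ∑ v ∈ s, ⟪v, ∑ u ∈ s, u⟫_ℝ :=
    calc ∑ _v ∈ s, a ^ 2 * #s = (a * #s) ^ 2 := by rw [sum_const, nsmul_eq_mul]; ring
      _ ≤ ‖∑ u ∈ s, u‖ ^ 2 := pow_le_pow_left₀ (by positivity) hnorm 2
      _ = ∑ v ∈ s, ⟪v, ∑ u ∈ s, u⟫_ℝ := by rw [← real_inner_self_eq_norm_sq, sum_inner]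
  exact exists_le_of_sum_le hs hsq

theorem inner_sum_le_card_filter_add {s : Finset H} {v : H} {b : ℝ} (hb : 0 ≤ b)
    (hv : ‖v‖ = 1) (hs : ∀ u ∈ s, ‖u‖ = 1) :
    ⟪v, ∑ u ∈ s, u⟫_ℝ ≤ #(s.filter fun u => ‖u - v‖ ≤ √(2 - b)) + b / 2 * #s := by
  set near := s.filter fun u => ‖u - v‖ ≤ √(2 - b)
  set far := s.filter fun u => ¬‖u - v‖ ≤ √(2 - b)
  have hnear : ∑ u ∈ near, ⟪v, u⟫_ℝ ≤ #near := by
    simpa using sum_le_sum fun u hu => real_inner_le_one hv (hs u (mem_filter.mp hu).1)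
  have hfar : ∑ u ∈ far, ⟪v, u⟫_ℝ ≤ b / 2 * #s :=
    calc ∑ u ∈ far, ⟪v, u⟫_ℝ ≤ ∑ _u ∈ far, b / 2 := sum_le_sum fun u hu => by
          obtain ⟨hus, hus_far⟩ := mem_filter.mp hu
          rw [real_inner_comm]
          exact (inner_lt_of_sqrt_lt_norm_sub (hs u hus) hv (not_le.mp hus_far)).le
      _ = b / 2 * #far := by rw [sum_const, nsmul_eq_mul, mul_comm]
      _ ≤ b / 2 * #s := by gcongr; exact filter_subset _ s
  rw [inner_sum, ← sum_filter_add_sum_filter_not s fun u => ‖u - v‖ ≤ √(2 - b)]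
  linarith

end UnitVectors

theorem cap_recentering_general {H : Type*} [NormedAddCommGroup H] [InnerProductSpace ℝ H]
    (ε : ℝ) (hε : 0 < ε)
    (n : ℕ) (hn : 1 ≤ n) (U : Finset H) (hcard : U.card = n)
    (hunit : ∀ u ∈ U, ‖u‖ = 1)
    (ustar : H) (hustar : ‖ustar‖ = 1)
    (hcap : ∀ u ∈ U, ‖ustar - u‖ ≤ Real.sqrt 2 - ε)
    (α : ℝ) (hα : α = ε * (2 * Real.sqrt 2 - ε) / 2) :
    ∃ u₀ ∈ U,
      (α ^ 2 / 2) * n ≤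
        ((U.filter (fun u => ‖u - u₀‖ ≤ Real.sqrt (2 - α ^ 2))).card : ℝ) := by
  have hU : U.Nonempty := card_pos.mp (hcard ▸ hn)
  have hsqrt2 : √2 ^ 2 = 2 := Real.sq_sqrt zero_le_two
  have hε2 : ε ≤ √2 := by
    obtain ⟨u, hu⟩ := hU
    linarith [hcap u hu, norm_nonneg (ustar - u)]
  have hα0 : 0 ≤ α := by rw [hα]; nlinarith
  have hinner : ∀ u ∈ U, α ≤ ⟪ustar, u⟫_ℝ := fun u hu => by
    convert one_sub_sq_div_two_le_inner hustar (hunit u hu) (hcap u hu) using 1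
    rw [hα]
    linear_combination (1 / 2 : ℝ) * hsqrt2
  obtain ⟨u₀, hu₀, hsum⟩ := exists_sq_mul_card_le_inner_sum hU hα0 hustar hinner
  refine ⟨u₀, hu₀, ?_⟩
  have hcount := inner_sum_le_card_filter_add (sq_nonneg α) (hunit u₀ hu₀) hunit
  rw [hcard] at hsum hcount
  linarith

/-- If a finite set `U` of `n ≥ 1` unit vectors is covered by a spherical cap of chordal
radius `√2 - ε` around a unit vector `u*`, then with `α = ε(2√2 - ε)/2` there is a point
`u₀ ∈ U` such that at least `(α²/2)·n` points of `U` lie within distance `√(2 - α²)`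
of `u₀`. -/
theorem cap_recentering {H : Type*} [NormedAddCommGroup H] [InnerProductSpace ℝ H]
    (ε : ℝ) (hε : 0 < ε) (hε2 : ε < Real.sqrt 2)
    (n : ℕ) (hn : 1 ≤ n) (U : Finset H) (hcard : U.card = n)
    (hunit : ∀ u ∈ U, ‖u‖ = 1)
    (ustar : H) (hustar : ‖ustar‖ = 1)
    (hcap : ∀ u ∈ U, ‖ustar - u‖ ≤ Real.sqrt 2 - ε)
    (α : ℝ) (hα : α = ε * (2 * Real.sqrt 2 - ε) / 2) :
    ∃ u₀ ∈ U,
      (α ^ 2 / 2) * n ≤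
        ((U.filter (fun u => ‖u - u₀‖ ≤ Real.sqrt (2 - α ^ 2))).card : ℝ) :=
  cap_recentering_general ε hε n hn U hcard hunit ustar hustar hcap α hα
end

section
/- Let H be a real inner product space, let R > 0, let x ∈ H with ‖x‖ = R, and let 0 < ε ≤ √2. Set η = ε(2√2 − ε)/2. Then every u ∈ H with ‖u‖ = R and ‖u − x‖ ≤ (√2 − ε)R satisfies ‖u − η·x‖ ≤ R·√(1 − η²). In particular, the intersection of the sphere of radius R centered at the origin with the closed ball of radius (√2 − ε)R centered at x is contained in a closed ball of radius R·√(1 − η²) ≤ R. -/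
/-!
For `u` and `x` on the sphere of radius `R`, `‖u - x‖² = 2R² - 2⟪u, x⟫`, so the condition
`‖u - x‖ ≤ (√2 - ε)R` says exactly that `⟪u, x⟫ ≥ ηR²`, since `2 - (√2 - ε)² = 2η`. Expanding
`‖u - η x‖² = R² - 2η⟪u, x⟫ + η²R²` and using `η ≥ 0` then bounds it by `R²(1 - η²)`.
-/

open Real RealInnerProductSpace

section

variable {E : Type*} [NormedAddCommGroup E] [InnerProductSpace ℝ E]

theorem le_two_mul_inner_of_norm_sub_le {u x : E} {r : ℝ} (h : ‖u - x‖ ≤ r) :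
    ‖u‖ ^ 2 + ‖x‖ ^ 2 - r ^ 2 ≤ 2 * ⟪u, x⟫ := by
  have h2 := pow_le_pow_left₀ (norm_nonneg _) h 2
  rw [norm_sub_sq_real] at h2
  linarith

theorem norm_sub_smul_sq_le_of_le_inner {u x : E} {η : ℝ} (hη : 0 ≤ η)
    (h : η * ‖x‖ ^ 2 ≤ ⟪u, x⟫) : ‖u - η • x‖ ^ 2 ≤ ‖u‖ ^ 2 - η ^ 2 * ‖x‖ ^ 2 := by
  rw [norm_sub_sq_real, real_inner_smul_right, norm_smul, mul_pow, Real.norm_eq_abs, sq_abs]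
  nlinarith

theorem norm_sub_smul_le_of_norm_sub_le {u x : E} {r η : ℝ} (hu : ‖u‖ = ‖x‖) (hη : 0 ≤ η)
    (hr : 2 * η * ‖x‖ ^ 2 ≤ 2 * ‖x‖ ^ 2 - r ^ 2) (h : ‖u - x‖ ≤ r) :
    ‖u - η • x‖ ≤ ‖x‖ * √(1 - η ^ 2) := by
  have hinner : η * ‖x‖ ^ 2 ≤ ⟪u, x⟫ := by
    have := le_two_mul_inner_of_norm_sub_le h
    rw [hu] at this
    linarith
  have hsq : ‖u - η • x‖ ^ 2 ≤ ‖x‖ ^ 2 * (1 - η ^ 2) := by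
    have := norm_sub_smul_sq_le_of_le_inner hη hinner
    rw [hu] at this
    linarith
  calc ‖u - η • x‖ ≤ √(‖x‖ ^ 2 * (1 - η ^ 2)) := le_sqrt_of_sq_le hsq
    _ = ‖x‖ * √(1 - η ^ 2) := by rw [sqrt_mul (sq_nonneg _), sqrt_sq (norm_nonneg _)]

end

theorem cap_shrinkage_general {H : Type*} [NormedAddCommGroup H] [InnerProductSpace ℝ H]
    (R : ℝ) (x : H) (hx : ‖x‖ = R)
    (ε : ℝ) (hε0 : 0 < ε) (hε2 : ε ≤ Real.sqrt 2)
    (η : ℝ) (hη : η = ε * (2 * Real.sqrt 2 - ε) / 2) :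
    (∀ u : H, ‖u‖ = R → ‖u - x‖ ≤ (Real.sqrt 2 - ε) * R →
      ‖u - η • x‖ ≤ R * Real.sqrt (1 - η ^ 2)) ∧
    R * Real.sqrt (1 - η ^ 2) ≤ R := by
  subst hx
  have hsqrt2 : √2 ^ 2 = 2 := sq_sqrt zero_le_two
  have hη_nonneg : 0 ≤ η := by rw [hη]; nlinarith
  have hη_eq : 2 * η = 2 - (√2 - ε) ^ 2 := by rw [hη]; linear_combination hsqrt2
  have hcap : 2 * η * ‖x‖ ^ 2 ≤ 2 * ‖x‖ ^ 2 - ((√2 - ε) * ‖x‖) ^ 2 := by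
    rw [hη_eq]; exact le_of_eq (by ring)
  refine ⟨fun u hu hux => norm_sub_smul_le_of_norm_sub_le hu hη_nonneg hcap hux, ?_⟩
  exact mul_le_of_le_one_right (norm_nonneg x) (sqrt_le_one.mpr (by nlinarith))

/-- The intersection of the sphere `∂B(0, R)` with the closed ball of radius
`(√2 - ε)R` centered at a point `x` of the sphere is contained in the closed ball of
radius `R√(1 - η²)` centered at `η·x`, where `η = ε(2√2 - ε)/2`, and this radius is
at most `R`. -/
theorem cap_shrinkage {H : Type*} [NormedAddCommGroup H] [InnerProductSpace ℝ H]
    (R : ℝ) (hR : 0 < R) (x : H) (hx : ‖x‖ = R)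
    (ε : ℝ) (hε0 : 0 < ε) (hε2 : ε ≤ Real.sqrt 2)
    (η : ℝ) (hη : η = ε * (2 * Real.sqrt 2 - ε) / 2) :
    (∀ u : H, ‖u‖ = R → ‖u - x‖ ≤ (Real.sqrt 2 - ε) * R →
      ‖u - η • x‖ ≤ R * Real.sqrt (1 - η ^ 2)) ∧
    R * Real.sqrt (1 - η ^ 2) ≤ R :=
  cap_shrinkage_general R x hx ε hε0 hε2 η hη
end

section
/- Let c > 1 and let a, b, Δ be real numbers with 0 < Δ < a ≤ b and b²/a² ≥ c². Then ((b² − Δ²)/(a² − Δ²)) · (a²/b²) ≥ 1 + (c² − 1)·Δ²/b². -/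
/-!
With `A = a², B = b², D = Δ²` and `k = c²`, clearing the positive denominators turns the
claim into `(B + (k - 1) D)(A - D) ≤ (B - D) A`, and the difference of the two sides is
`D (B - k A) + (k - 1) D²`, which is nonnegative because `k A ≤ B` and `k ≥ 1`.
-/

theorem one_add_mul_div_le_div_mul_div {k A B D : ℝ} (hk : 1 ≤ k) (hD : 0 ≤ D) (hDA : D < A)
    (hkAB : k * A ≤ B) :
    1 + (k - 1) * D / B ≤ (B - D) / (A - D) * (A / B) := by
  have hAD : 0 < A - D := sub_pos.2 hDA
  have hB : 0 < B := by nlinarith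
  rw [div_mul_div_comm, le_div_iff₀ (by positivity)]
  calc (1 + (k - 1) * D / B) * ((A - D) * B)
      = (B - D) * A - (D * (B - k * A) + (k - 1) * D ^ 2) := by field_simp; ring
    _ ≤ (B - D) * A :=
      sub_le_self _ <| add_nonneg (mul_nonneg hD (sub_nonneg.2 hkAB))
        (mul_nonneg (sub_nonneg.2 hk) (sq_nonneg D))

theorem eta_growth_general (c a b Δ : ℝ) (hc : 1 < c)
    (hΔ : 0 < Δ) (hΔa : Δ < a) (hcb : c ^ 2 ≤ b ^ 2 / a ^ 2) :
    1 + (c ^ 2 - 1) * Δ ^ 2 / b ^ 2 ≤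
      ((b ^ 2 - Δ ^ 2) / (a ^ 2 - Δ ^ 2)) * (a ^ 2 / b ^ 2) := by
  have ha : 0 < a := hΔ.trans hΔa
  refine one_add_mul_div_le_div_mul_div (one_le_pow₀ hc.le) (sq_nonneg Δ)
    (pow_lt_pow_left₀ hΔa hΔ.le two_ne_zero) ?_
  rwa [le_div_iff₀ (by positivity)] at hcb

/-- Quantitative growth of `η = r₂²/r₁²` under a projection step: if `0 < Δ < a ≤ b`
and `b²/a² ≥ c²` with `c > 1`, then
`((b² - Δ²)/(a² - Δ²))·(a²/b²) ≥ 1 + (c² - 1)·Δ²/b²`. -/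
theorem eta_growth (c a b Δ : ℝ) (hc : 1 < c)
    (hΔ : 0 < Δ) (hΔa : Δ < a) (hab : a ≤ b) (hcb : c ^ 2 ≤ b ^ 2 / a ^ 2) :
    1 + (c ^ 2 - 1) * Δ ^ 2 / b ^ 2 ≤
      ((b ^ 2 - Δ ^ 2) / (a ^ 2 - Δ ^ 2)) * (a ^ 2 / b ^ 2) :=
  eta_growth_general c a b Δ hc hΔ hΔa hcb
end
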